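/- arXiv:2206.08095 — 2 statements merged into one kernel-verified Lean document; each statement's English description precedes it below -/
import Mathlib

section
/- For every real α with 2 ≤ α ≤ 3, b(α) ≤ (5 − α)/3. -/
open scoped ENNReal

set_option linter.unusedSectionVars false

attribute [local instance 10] Classical.propDecidable

/-- A multigraph (parallel edges allowed): a finite edge type with two endpoint maps. -/
structure Multigraph (V : Type) where
  E : Type
  [fE : Fintype E]
  fst : E → V
  snd : E → V

attribute [instance] Multigraph.fE

namespace Multigraph

variable {V : Type} [Fintype V] [DecidableEq V]

/-- The number of edges of a multigraph. -/
noncomputable def edgeCount (G : Multigraph V) : ℕ := Fintype.card G.E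

/-- The net current flowing out of `v` under the current assignment `f`
(the current `f e` flows from `G.fst e` to `G.snd e`). -/
noncomputable def netFlow (G : Multigraph V) (f : G.E → ℝ) (v : V) : ℝ :=
  ∑ e : G.E, ((if G.fst e = v then f e else 0) - (if G.snd e = v then f e else 0))

/-- A unit flow from `x` to `y`: Kirchhoff's current law holds at every vertex other
than `x` and `y`, and the net current out of `x` is `1`. -/
def IsUnitFlow (G : Multigraph V) (x y : V) (f : G.E → ℝ) : Prop :=
  G.netFlow f x = 1 ∧ ∀ v : V, v ≠ x → v ≠ y → G.netFlow f v = 0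

/-- The effective resistance between `x` and `y`: the least energy `∑ e, (I e)^2` of a
unit flow from `x` to `y` (`∞` if there is no such flow, `0` if `x = y`). -/
noncomputable def effRes (G : Multigraph V) (x y : V) : ℝ≥0∞ :=
  if x = y then 0
  else ⨅ f : {f : G.E → ℝ // G.IsUnitFlow x y f}, ENNReal.ofReal (∑ e : G.E, (f.1 e) ^ 2)

/-- Adjacency in a multigraph. -/
def Adj (G : Multigraph V) (u v : V) : Prop :=
  ∃ e : G.E, (G.fst e = u ∧ G.snd e = v) ∨ (G.fst e = v ∧ G.snd e = u)

/-- A multigraph is connected if every vertex is reachable from every other. -/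
def Connected (G : Multigraph V) : Prop :=
  ∀ u v : V, Relation.ReflTransGen G.Adj u v

/-- The degree of a vertex (loops count twice). -/
noncomputable def degree (G : Multigraph V) (v : V) : ℕ :=
  (Finset.univ.filter fun e : G.E => G.fst e = v).card +
    (Finset.univ.filter fun e : G.E => G.snd e = v).card

/-- The number of leaves (vertices of degree 1). -/
noncomputable def leafCount (G : Multigraph V) : ℕ :=
  (Finset.univ.filter fun v : V => G.degree v = 1).card

/-- `A(G)`: the average effective resistance over unordered pairs of distinct vertices. -/
noncomputable def avgPairRes (G : Multigraph V) : ℝ≥0∞ :=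
  (∑ x : V, ∑ y : V, G.effRes x y) / (2 * ((Fintype.card V).choose 2 : ℝ≥0∞))

/-- `A'(G)`: the average effective resistance over ordered pairs of vertices. -/
noncomputable def avgOrdRes (G : Multigraph V) : ℝ≥0∞ :=
  (∑ x : V, ∑ y : V, G.effRes x y) / ((Fintype.card V : ℝ≥0∞) ^ 2)

/-- The total effective resistance to the root `ρ`. -/
noncomputable def Rtot (G : Multigraph V) (ρ : V) : ℝ≥0∞ := ∑ x : V, G.effRes ρ x

/-- `B(G)`: the average resistance of a non-root vertex to the root `ρ`. -/
noncomputable def rootedAvg (G : Multigraph V) (ρ : V) : ℝ≥0∞ :=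
  G.Rtot ρ / ((Fintype.card V - 1 : ℕ) : ℝ≥0∞)

/-- A tree: a connected multigraph with one more vertex than edge. -/
def IsTree (G : Multigraph V) : Prop := G.Connected ∧ G.edgeCount + 1 = Fintype.card V

/-- `v` is within distance `ℓ` of `x` (there is a lazy walk of length `ℓ` from `x` to `v`). -/
def WithinDist (G : Multigraph V) (ℓ : ℕ) (x v : V) : Prop :=
  ∃ p : ℕ → V, p 0 = x ∧ p ℓ = v ∧ ∀ i, i < ℓ → p i = p (i + 1) ∨ G.Adj (p i) (p (i + 1))

end Multigraph

open Multigraph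

/-- `b_n(α)`: the least value of `B(G)` over rooted graphs with `n` non-root vertices
and at most `αn/2` edges (the root may be any vertex). -/
noncomputable def bFun (n : ℕ) (α : ℝ) : ℝ≥0∞ :=
  ⨅ G : {p : Multigraph (Fin (n + 1)) × Fin (n + 1) // (p.1.edgeCount : ℝ) ≤ α * n / 2},
    rootedAvg G.1.1 G.1.2

/-- `a_n(α)`: the least value of `A'(G)` over graphs with `n` vertices and at most
`αn/2` edges. -/
noncomputable def aFun (n : ℕ) (α : ℝ) : ℝ≥0∞ :=
  ⨅ G : {G : Multigraph (Fin n) // (G.edgeCount : ℝ) ≤ α * n / 2}, avgOrdRes G.1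

/-- `G_S`: add a new root vertex `Fin.last n` joined by one edge to each entry of the
`s`-tuple (multiset) `S`. -/
noncomputable def addRoot {n : ℕ} (G : Multigraph (Fin n)) {s : ℕ} (S : Fin s → Fin n) :
    Multigraph (Fin (n + 1)) where
  E := G.E ⊕ Fin s
  fst := Sum.elim (fun e => (G.fst e).castSucc) fun _ => Fin.last n
  snd := Sum.elim (fun e => (G.snd e).castSucc) fun i => (S i).castSucc

section Trees

variable {V : Type} [Fintype V] [DecidableEq V]

/-- The map identifying all leaves of `T` to the single new vertex `Sum.inr ()`. -/
noncomputable def leafId (T : Multigraph V) (v : V) : V ⊕ Unit :=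
  if T.degree v = 1 then Sum.inr () else Sum.inl v

/-- The multigraph obtained from `T` by identifying all its leaves to one vertex. -/
noncomputable def identifyLeaves (T : Multigraph V) : Multigraph (V ⊕ Unit) where
  E := T.E
  fst := fun e => leafId T (T.fst e)
  snd := fun e => leafId T (T.snd e)

/-- `R(x,T)`: the effective resistance between `x` and the vertex obtained by
identifying all the leaves of `T`. -/
noncomputable def treeRes (T : Multigraph V) (x : V) : ℝ≥0∞ :=
  (identifyLeaves T).effRes (leafId T x) (Sum.inr ())

/-- The rooted graph formed from `T` and a set `S` of sinks: add a root `Sum.inr ()`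
joined to each `v ∈ S` by `degree v - 1` parallel edges. -/
noncomputable def randRooted (T : Multigraph V) (S : Finset V) : Multigraph (V ⊕ Unit) where
  E := T.E ⊕ (Σ v : {v : V // v ∈ S}, Fin (T.degree v.1 - 1))
  fst := Sum.elim (fun e => Sum.inl (T.fst e)) fun p => Sum.inl p.1.1
  snd := Sum.elim (fun e => Sum.inl (T.snd e)) fun _ => Sum.inr ()

/-- The subgraph induced on the vertices satisfying `P`. -/
noncomputable def inducedSub (G : Multigraph V) (P : V → Prop) : Multigraph {v : V // P v} where
  E := {e : G.E // P (G.fst e) ∧ P (G.snd e)}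
  fst := fun e => ⟨G.fst e.1, e.2.1⟩
  snd := fun e => ⟨G.snd e.1, e.2.2⟩

lemma withinDist_self (G : Multigraph V) (ℓ : ℕ) (x : V) : G.WithinDist ℓ x x :=
  ⟨fun _ => x, rfl, rfl, fun _ _ => Or.inl rfl⟩

/-- `R(x, T_x)` where `T_x` is the subgraph of `G` induced by the vertices within
distance `ℓ` of `x`. -/
noncomputable def localRes (G : Multigraph V) (ℓ : ℕ) (x : V) : ℝ≥0∞ :=
  treeRes (inducedSub G (G.WithinDist ℓ x)) ⟨x, withinDist_self G ℓ x⟩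

/-- cyclic successor on `Fin k` -/
def cycSucc {k : ℕ} (i : Fin k) : Fin k :=
  ⟨(i.1 + 1) % k, Nat.mod_lt _ (Nat.lt_of_le_of_lt (Nat.zero_le i.1) i.isLt)⟩

/-- `G` contains a cycle with `k` (distinct) vertices and `k` distinct edges. -/
def HasCycleLength (G : Multigraph V) (k : ℕ) : Prop :=
  0 < k ∧ ∃ (v : Fin k → V) (e : Fin k → G.E), Function.Injective v ∧ Function.Injective e ∧
    ∀ i : Fin k, (G.fst (e i) = v i ∧ G.snd (e i) = v (cycSucc i)) ∨
      (G.fst (e i) = v (cycSucc i) ∧ G.snd (e i) = v i)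

/-- `G⁺/x`: delete the two edges `e₁, e₂` at the degree-2 vertex `x`, add an edge
`y₁y₂` (contracting `y₁x`), and reuse `x` as a new leaf attached to the root `ρ`. -/
noncomputable def contractPlus (G : Multigraph V) (x ρ : V) (e₁ e₂ : G.E) (y₁ y₂ : V) :
    Multigraph V where
  E := {e : G.E // e ≠ e₁ ∧ e ≠ e₂} ⊕ Fin 2
  fst := Sum.elim (fun e => G.fst e.1) fun i => if i = 0 then y₁ else x
  snd := Sum.elim (fun e => G.snd e.1) fun i => if i = 0 then y₂ else ρ

end Trees

/-- A Queen-Bee network: every non-root vertex is joined to the root. -/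
def QueenBee {n : ℕ} (G : Multigraph (Fin (n + 1))) (ρ : Fin (n + 1)) : Prop :=
  ∀ v : Fin (n + 1), v ≠ ρ → G.Adj ρ v

section Weighted

variable {V : Type} [Fintype V] [DecidableEq V]

/-- A unit flow from `x` to `y` in a weighted network with conductances `c`:
antisymmetric, zero on edges of zero conductance, and satisfying Kirchhoff's
current law away from `x` and `y`, with net current `1` out of `x`. -/
def IsWUnitFlow (c : V → V → ℝ) (x y : V) (f : V → V → ℝ) : Prop :=
  (∀ u v, f u v = - f v u) ∧ (∀ u v, c u v = 0 → f u v = 0) ∧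
    (∑ v : V, f x v) = 1 ∧ ∀ u : V, u ≠ x → u ≠ y → (∑ v : V, f u v) = 0

/-- The effective resistance between `x` and `y` in the weighted network with
conductances `c`: the least energy `∑_{uv} I_{uv}²/c_{uv}` of a unit flow. -/
noncomputable def weffRes (c : V → V → ℝ) (x y : V) : ℝ≥0∞ :=
  if x = y then 0
  else ⨅ f : {f : V → V → ℝ // IsWUnitFlow c x y f},
    ENNReal.ofReal ((1 / 2) * ∑ u : V, ∑ v : V, (f.1 u v) ^ 2 / c u v)

end Weighted

/-!
Take the star of `m` triangles and `k` single edges sharing the root, with `2m + k = n` non-root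
vertices and `m = ⌊(α - 2)n/2⌋`, so that its `3m + k` edges fit in the budget `αn/2`. By
Rayleigh monotonicity a triangle vertex is at resistance at most `2/3` from the root (its
resistance inside the triangle) and a pendant vertex at resistance at most `1`, so
`B ≤ (4m/3 + k)/n = 1 - 2m/(3n) ≤ (5 - α)/3 + 2/(3n)`.
-/

namespace Multigraph

variable {V W : Type} [Fintype V] [DecidableEq V] [Fintype W] [DecidableEq W]

lemma effRes_le_of_isUnitFlow {G : Multigraph V} {x y : V} (hxy : x ≠ y) {f : G.E → ℝ}
    (hf : G.IsUnitFlow x y f) : G.effRes x y ≤ ENNReal.ofReal (∑ e, f e ^ 2) := by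
  rw [effRes, if_neg hxy]
  exact iInf_le_of_le ⟨f, hf⟩ le_rfl

lemma effRes_le_one_of_edge (G : Multigraph V) (e : G.E) (he : G.fst e ≠ G.snd e) :
    G.effRes (G.fst e) (G.snd e) ≤ 1 := by
  set f : G.E → ℝ := fun e' => if e' = e then 1 else 0
  have hnet : ∀ v,
      G.netFlow f v = (if G.fst e = v then 1 else 0) - (if G.snd e = v then 1 else 0) :=
    fun v => (Fintype.sum_eq_single e fun e' he' => by simp [f, he']).trans (by simp [f])
  have hflow : G.IsUnitFlow (G.fst e) (G.snd e) f :=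
    ⟨by simp [hnet, he.symm], fun v hv₁ hv₂ => by simp [hnet, Ne.symm hv₁, Ne.symm hv₂]⟩
  refine (effRes_le_of_isUnitFlow he hflow).trans ?_
  simp [f]

section Embedding

variable {G : Multigraph V} {H : Multigraph W} {φ : V → W} {ψ : G.E → H.E}

lemma netFlow_extend (hψ : ψ.Injective) (hfst : ∀ e, H.fst (ψ e) = φ (G.fst e))
    (hsnd : ∀ e, H.snd (ψ e) = φ (G.snd e)) (f : G.E → ℝ) (w : W) :
    H.netFlow (Function.extend ψ f 0) w =
      ∑ e, ((if φ (G.fst e) = w then f e else 0) - (if φ (G.snd e) = w then f e else 0)) := by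
  refine (Fintype.sum_of_injective ψ hψ _ _ (fun e' he' => ?_) fun e => ?_).symm
  · simp [Function.extend_apply' _ _ _ (by simpa using he')]
  · simp [hψ.extend_apply, hfst, hsnd]

/-- Rayleigh monotonicity: a unit flow of `G` pushed forward along the embedding is a unit flow
of `H` with the same energy. -/
lemma effRes_le_of_embedding (hφ : φ.Injective) (hψ : ψ.Injective)
    (hfst : ∀ e, H.fst (ψ e) = φ (G.fst e)) (hsnd : ∀ e, H.snd (ψ e) = φ (G.snd e)) (x y : V) :
    H.effRes (φ x) (φ y) ≤ G.effRes x y := by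
  by_cases hxy : x = y
  · simp [effRes, hxy]
  rw [show G.effRes x y = _ from if_neg hxy]
  refine le_iInf fun ⟨f, hf_out, hf_kirchhoff⟩ => ?_
  have hnet : ∀ v, H.netFlow (Function.extend ψ f 0) (φ v) = G.netFlow f v := fun v => by
    rw [netFlow_extend hψ hfst hsnd]
    simp only [hφ.eq_iff, netFlow]
  have hflow : H.IsUnitFlow (φ x) (φ y) (Function.extend ψ f 0) := by
    refine ⟨by rw [hnet, hf_out], fun w hwx hwy => ?_⟩
    by_cases hw : ∃ v, φ v = w
    · obtain ⟨v, rfl⟩ := hw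
      rw [hnet]
      exact hf_kirchhoff v (fun h => hwx (h ▸ rfl)) fun h => hwy (h ▸ rfl)
    · push Not at hw
      simp [netFlow_extend hψ hfst hsnd, hw]
  refine (effRes_le_of_isUnitFlow (hφ.ne hxy) hflow).trans_eq ?_
  congr 1
  refine (Fintype.sum_of_injective ψ hψ _ _ (fun e' he' => ?_) fun e => ?_).symm
  · simp [Function.extend_apply' _ _ _ (by simpa using he')]
  · simp [hψ.extend_apply]

end Embedding

def map (G : Multigraph V) (φ : V → W) : Multigraph W where
  E := G.E
  fst := φ ∘ G.fst
  snd := φ ∘ G.snd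

lemma Rtot_map_le (G : Multigraph V) (e : V ≃ W) (ρ : V) : (G.map e).Rtot (e ρ) ≤ G.Rtot ρ := by
  rw [Rtot, ← e.sum_comp]
  exact Finset.sum_le_sum fun v _ =>
    effRes_le_of_embedding (G := G) (H := G.map e) (φ := e) (ψ := id) e.injective
      Function.injective_id (fun _ => rfl) (fun _ => rfl) ρ v

end Multigraph

abbrev triangle : Multigraph (Fin 3) where
  E := Fin 3
  fst := ![0, 0, 1]
  snd := ![1, 2, 2]

lemma triangle_effRes_le (i : Fin 3) : triangle.effRes 0 i ≤ ENNReal.ofReal (2 / 3) := by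
  fin_cases i
  · simp [effRes]
  · have hflow : triangle.IsUnitFlow 0 1 ![2 / 3, 1 / 3, -(1 / 3)] := by
      refine ⟨by simp [netFlow, Fin.sum_univ_three]; norm_num, fun v hv₀ hv => ?_⟩
      fin_cases v <;> simp_all [netFlow, Fin.sum_univ_three]
    refine (effRes_le_of_isUnitFlow (by decide) hflow).trans_eq ?_
    simp [Fin.sum_univ_three]; norm_num
  · have hflow : triangle.IsUnitFlow 0 2 ![1 / 3, 2 / 3, 1 / 3] := by
      refine ⟨by simp [netFlow, Fin.sum_univ_three]; norm_num, fun v hv₀ hv => ?_⟩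
      fin_cases v <;> simp_all [netFlow, Fin.sum_univ_three]
    refine (effRes_le_of_isUnitFlow (by decide) hflow).trans_eq ?_
    simp [Fin.sum_univ_three]; norm_num

def triangleVertex {m k : ℕ} (j : Fin m) : Fin 3 → Option ((Fin m × Fin 2) ⊕ Fin k) :=
  Fin.cases none fun t => some (.inl (j, t))

lemma triangleVertex_injective {m k : ℕ} (j : Fin m) :
    (triangleVertex (k := k) j).Injective := by
  intro a b h
  cases a using Fin.cases <;> cases b using Fin.cases <;> simp_all [triangleVertex]

def edgeTriangleStar (m k : ℕ) : Multigraph (Option ((Fin m × Fin 2) ⊕ Fin k)) where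
  E := (Fin m × Fin 3) ⊕ Fin k
  fst := Sum.elim (fun p => triangleVertex p.1 (triangle.fst p.2)) fun _ => none
  snd := Sum.elim (fun p => triangleVertex p.1 (triangle.snd p.2)) fun i => some (.inr i)

namespace edgeTriangleStar

variable (m k : ℕ)

lemma edgeCount_eq : (edgeTriangleStar m k).edgeCount = 3 * m + k := by
  rw [edgeCount, Fintype.card_eq_nat_card]
  simp [edgeTriangleStar, mul_comm]

lemma effRes_triangle_le (j : Fin m) (t : Fin 2) :
    (edgeTriangleStar m k).effRes none (some (.inl (j, t))) ≤ ENNReal.ofReal (2 / 3) :=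
  (effRes_le_of_embedding (H := edgeTriangleStar m k) (ψ := fun t => .inl (j, t))
    (triangleVertex_injective j) (fun _ _ h => by simpa using Sum.inl_injective h)
    (fun _ => rfl) (fun _ => rfl) 0 t.succ).trans (triangle_effRes_le _)

lemma effRes_edge_le (i : Fin k) : (edgeTriangleStar m k).effRes none (some (.inr i)) ≤ 1 :=
  effRes_le_one_of_edge (edgeTriangleStar m k) (.inr i) (by simp [edgeTriangleStar])

lemma Rtot_le : (edgeTriangleStar m k).Rtot none ≤ ENNReal.ofReal (4 * m / 3 + k) := by
  rw [Rtot, Fintype.sum_option, Fintype.sum_sum_type, Fintype.sum_prod_type]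
  calc _ ≤ 0 + (∑ j : Fin m, ∑ t : Fin 2, ENNReal.ofReal (2 / 3) + ∑ i : Fin k, 1) := by
        gcongr with j _ t _ i
        · simp [effRes]
        · exact effRes_triangle_le m k j t
        · exact effRes_edge_le m k i
    _ = ENNReal.ofReal (4 * m / 3 + k) := by
        rw [ENNReal.ofReal_add (by positivity) (by positivity)]
        simp only [Finset.sum_const, Finset.card_univ, Fintype.card_fin, nsmul_eq_mul, mul_one,
          zero_add, ENNReal.ofReal_natCast]
        rw [← ENNReal.ofReal_natCast, ← ENNReal.ofReal_natCast 2,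
          ← ENNReal.ofReal_mul (by positivity), ← ENNReal.ofReal_mul (by positivity)]
        ring_nf

end edgeTriangleStar

lemma bFun_le_rootedAvg {V : Type} [Fintype V] [DecidableEq V] (G : Multigraph V) (ρ : V)
    {n : ℕ} {α : ℝ} (hV : Fintype.card V = n + 1) (hG : (G.edgeCount : ℝ) ≤ α * n / 2) :
    bFun n α ≤ G.rootedAvg ρ := by
  let e : V ≃ Fin (n + 1) := Fintype.equivFinOfCardEq hV
  refine (iInf_le _ ⟨(G.map e, e ρ), hG⟩).trans ?_
  simp only [rootedAvg, hV, Fintype.card_fin]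
  gcongr
  exact Rtot_map_le G e ρ

lemma bFun_le_five_sub_div_three_add {α : ℝ} (h2 : 2 ≤ α) (h3 : α ≤ 3) {N : ℕ} (hN : 0 < N) :
    bFun N α ≤ ENNReal.ofReal ((5 - α) / 3 + 2 / 3 / N) := by
  have hNpos : (0 : ℝ) < N := by exact_mod_cast hN
  set m := ⌊(α - 2) * N / 2⌋₊
  have hm_le : (m : ℝ) ≤ (α - 2) * N / 2 := Nat.floor_le (by nlinarith)
  have hm_gt : (α - 2) * N / 2 < m + 1 := Nat.lt_floor_add_one _
  have h2m : 2 * m ≤ N := by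
    have : (2 * m : ℝ) ≤ N := by nlinarith
    exact_mod_cast this
  set k := N - 2 * m
  have hk : (k : ℝ) = N - 2 * m := by rw [Nat.cast_sub h2m]; push_cast; ring
  have hcard : Fintype.card (Option ((Fin m × Fin 2) ⊕ Fin k)) = N + 1 := by simp; omega
  have hedges : ((edgeTriangleStar m k).edgeCount : ℝ) ≤ α * N / 2 := by
    rw [edgeTriangleStar.edgeCount_eq]; push_cast; linarith
  calc bFun N α ≤ (edgeTriangleStar m k).rootedAvg none := bFun_le_rootedAvg _ _ hcard hedges
    _ ≤ ENNReal.ofReal (4 * m / 3 + k) / ENNReal.ofReal N := by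
        rw [rootedAvg, hcard, Nat.add_sub_cancel, ENNReal.ofReal_natCast]
        gcongr
        exact edgeTriangleStar.Rtot_le m k
    _ ≤ ENNReal.ofReal ((5 - α) / 3 + 2 / 3 / N) := by
        rw [← ENNReal.ofReal_div_of_pos hNpos]
        gcongr
        rw [div_le_iff₀ hNpos, hk]
        field_simp
        linarith

/-- **Lemma (stars of edges and triangles).** For `α ∈ [2,3]`, `b(α) ≤ (5 - α)/3`. -/
theorem stmt7 (α : ℝ) (h2 : 2 ≤ α) (h3 : α ≤ 3) (L : ℝ≥0∞)
    (hL : Filter.Tendsto (fun n : ℕ => bFun (n + 1) α) Filter.atTop (nhds L)) :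
    L ≤ ENNReal.ofReal ((5 - α) / 3) := by
  have hbound : Filter.Tendsto (fun n : ℕ => ENNReal.ofReal ((5 - α) / 3 + 2 / 3 / (n + 1 : ℕ)))
      Filter.atTop (nhds (ENNReal.ofReal ((5 - α) / 3))) := by
    refine ENNReal.tendsto_ofReal ?_
    simpa using (tendsto_const_nhds (x := (5 - α) / 3)).add
      ((tendsto_const_div_atTop_nhds_zero_nat (2 / 3 : ℝ)).comp (Filter.tendsto_add_atTop_nat 1))
  exact le_of_tendsto_of_tendsto' hL hbound fun n =>
    bFun_le_five_sub_div_three_add h2 h3 n.succ_pos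
end

section
/- Let G be a connected rooted graph with n non-root vertices, with no leaves, and with fewer than 9n/8 edges (average degree less than 9/4). Then there exists a vertex x of degree 2, with neighbours y₁ and y₂, such that Rtot(G) − Rtot(G⁺/x) ≥ 1/100, where G/x is the graph obtained from G by contracting the edge y₁x (equivalently, deleting x and adding an edge y₁y₂), and G⁺/x is G/x with one additional leaf attached to the root (so G⁺/x has the same numbers of vertices and edges as G). -/
open scoped ENNReal

set_option linter.unusedSectionVars false

attribute [local instance 10] Classical.propDecidable

open Multigraph

/-!
Since `G` is connected without leaves, every degree is at least two. Some non-root `x` of degree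
two has all its neighbours of degree two and different from the root: otherwise each such vertex
sends an edge to the root or to a vertex of degree at least three, and counting degrees gives at
least `9n/8` edges. By connectivity the neighbours `u`, `w` of `x` are distinct, and so are the
other edges at `u` and at `w`.

Suppressing `x` never increases `R(ρ, z)` for `z ≠ x`: a unit flow of `G` is rerouted along the
new edge `uw`, which replaces the two edges at `x` carrying the same current. If instead the flow
ends at `x`, with inflow split as `p₁ + p₂ = 1` over the two edges at `x`, rerouting it gives unit
flows to `w` and to `u` in `G⁺/x` that save `p₂²` and `p₁²`. A unit flow to `u` carries currents
`q, q, 1 - q, q` on the four edges around `x`, so its energy is at least `3q² + (1 - q)²`, and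
likewise for `w`. As `R(ρ, x)` drops to at most `1`, an elementary inequality in these currents
shows that `R(ρ, x) + R(ρ, u) + R(ρ, w)` drops by at least `1/100`.
-/

open Finset

lemma one_add_min_add_min_le {A U W p₁ p₂ q r : ℝ} (hp : p₁ + p₂ = -1)
    (hU : 3 * q ^ 2 + (1 - q) ^ 2 ≤ U) (hW : 3 * r ^ 2 + (1 - r) ^ 2 ≤ W) :
    1 + min (U - q ^ 2) (A - p₁ ^ 2) + min (W - r ^ 2) (A - p₂ ^ 2) + 1 / 100 ≤ A + U + W := by
  have : 101 / 100 ≤ q ^ 2 + p₂ ^ 2 + W ∨ 101 / 100 ≤ r ^ 2 + p₁ ^ 2 + U := by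
    by_contra! h
    nlinarith [sq_nonneg (5 * q - 1), sq_nonneg (5 * r - 1), sq_nonneg (p₁ - p₂)]
  rcases this with h | h
  · linarith [min_le_left (U - q ^ 2) (A - p₁ ^ 2), min_le_right (W - r ^ 2) (A - p₂ ^ 2)]
  · linarith [min_le_right (U - q ^ 2) (A - p₁ ^ 2), min_le_left (W - r ^ 2) (A - p₂ ^ 2)]

lemma Finset.sum_add_le_sum_of_le_off_triple {V M : Type*} [Fintype V] [DecidableEq V]
    [AddCommMonoid M] [PartialOrder M] [IsOrderedAddMonoid M] {f g : V → M} {x u w : V} {c : M}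
    (hxu : x ≠ u) (hxw : x ≠ w) (huw : u ≠ w) (h : f x + f u + f w + c ≤ g x + g u + g w)
    (hrest : ∀ z, z ≠ x → z ≠ u → z ≠ w → f z ≤ g z) : ∑ z, f z + c ≤ ∑ z, g z := by
  have hsplit : ∀ F : V → M, ∑ z, F z = F x + F u + F w + ∑ z ∈ {x, u, w}ᶜ, F z := fun F => by
    rw [← sum_add_sum_compl {x, u, w} F, sum_insert (by simp [hxu, hxw]), sum_pair huw,
      ← add_assoc]
  rw [hsplit f, hsplit g, add_right_comm]
  refine add_le_add h (sum_le_sum fun z hz => ?_)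
  simp only [mem_compl, mem_insert, mem_singleton, not_or] at hz
  exact hrest z hz.1 hz.2.1 hz.2.2

namespace Multigraph

variable {V : Type} {G : Multigraph V}

def Ends (G : Multigraph V) (e : G.E) (p q : V) : Prop :=
  (G.fst e = p ∧ G.snd e = q) ∨ (G.fst e = q ∧ G.snd e = p)

lemma Ends.symm {e : G.E} {p q : V} (h : G.Ends e p q) : G.Ends e q p := Or.symm h

lemma Ends.ne {e e' : G.E} {p q v z : V} (h : G.Ends e p q) (h' : G.Ends e' v z) (hp : v ≠ p)
    (hq : v ≠ q) : e ≠ e' := by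
  rintro rfl
  rcases h with ⟨h1, h2⟩ | ⟨h1, h2⟩ <;> rcases h' with ⟨h1', h2'⟩ | ⟨h1', h2'⟩ <;> simp_all

lemma Ends.eq_of_ends {e : G.E} {p q r s : V} (h : G.Ends e p q) (h' : G.Ends e r s)
    (hpr : p ≠ r) : p = s ∧ q = r := by
  rcases h with ⟨h1, h2⟩ | ⟨h1, h2⟩ <;> rcases h' with ⟨h1', h2'⟩ | ⟨h1', h2'⟩ <;>
    simp_all [eq_comm]

lemma Connected.mem_of_closed (hconn : G.Connected) {S : Set V}
    (hS : ∀ e y z, G.Ends e y z → y ∈ S → z ∈ S) {p q : V} (hp : p ∈ S) : q ∈ S := by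
  induction hconn p q with
  | refl => exact hp
  | tail _ hadj ih => exact hS _ _ _ hadj.choose_spec ih

noncomputable def energy (G : Multigraph V) (f : G.E → ℝ) : ℝ := ∑ e, f e ^ 2

lemma sum_sq_le_energy (f : G.E → ℝ) (s : Finset G.E) : ∑ e ∈ s, f e ^ 2 ≤ G.energy f :=
  sum_le_sum_of_subset_of_nonneg (subset_univ s) fun _ _ _ => sq_nonneg _

lemma sq_le_energy (f : G.E → ℝ) (e : G.E) : f e ^ 2 ≤ G.energy f := by
  simpa using G.sum_sq_le_energy f {e}

structure Suppressible (G : Multigraph V) (x u w : V) (e₁ e₂ : G.E) : Prop where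
  ends_left : G.Ends e₁ x u
  ends_right : G.Ends e₂ x w
  ne_left : x ≠ u
  ne_right : x ≠ w
  edge_ne : e₁ ≠ e₂
  avoid : ∀ e, e ≠ e₁ → e ≠ e₂ → G.fst e ≠ x ∧ G.snd e ≠ x

variable {x u w a b ρ : V} {e₁ e₂ e₃ e₄ : G.E}

lemma Suppressible.symm (h : G.Suppressible x u w e₁ e₂) : G.Suppressible x w u e₂ e₁ :=
  ⟨h.ends_right, h.ends_left, h.ne_right, h.ne_left, h.edge_ne.symm,
    fun e h2 h1 => h.avoid e h1 h2⟩

lemma Suppressible.eq_of_ends (h : G.Suppressible x u w e₁ e₂) {e : G.E} {z : V}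
    (he : G.Ends e x z) : e = e₁ ∧ z = u ∨ e = e₂ ∧ z = w := by
  by_cases h₁ : e = e₁
  · subst h₁
    exact Or.inl ⟨rfl, (h.ends_left.symm.eq_of_ends he h.ne_left.symm).1.symm⟩
  by_cases h₂ : e = e₂
  · subst h₂
    exact Or.inr ⟨rfl, (h.ends_right.symm.eq_of_ends he h.ne_right.symm).1.symm⟩
  have := h.avoid e h₁ h₂
  rcases he with ⟨h', -⟩ | ⟨-, h'⟩ <;> simp_all

variable [DecidableEq V]

noncomputable def currentOut (G : Multigraph V) (f : G.E → ℝ) (e : G.E) (v : V) : ℝ :=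
  (if G.fst e = v then f e else 0) - (if G.snd e = v then f e else 0)

lemma Ends.currentOut_eq {e : G.E} {p q : V} (h : G.Ends e p q) (f : G.E → ℝ) (v : V) :
    G.currentOut f e v =
      (if v = p then G.currentOut f e p else 0) - (if v = q then G.currentOut f e p else 0) := by
  rcases h with ⟨h1, h2⟩ | ⟨h1, h2⟩ <;> by_cases hvp : v = p <;> by_cases hvq : v = q <;>
    simp_all [currentOut, eq_comm]

lemma Ends.sq_currentOut {e : G.E} {p q : V} (h : G.Ends e p q) (hpq : p ≠ q) (f : G.E → ℝ) :
    G.currentOut f e p ^ 2 = f e ^ 2 := by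
  rcases h with ⟨h1, h2⟩ | ⟨h1, h2⟩ <;> simp [currentOut, h1, h2, hpq.symm]

lemma Ends.currentOut_right {e : G.E} {p q : V} (h : G.Ends e p q) (hpq : p ≠ q)
    (f : G.E → ℝ) : G.currentOut f e q = - G.currentOut f e p := by
  simp [h.currentOut_eq f q, hpq.symm]

lemma netFlow_eq_sum_currentOut (f : G.E → ℝ) (v : V) :
    G.netFlow f v = ∑ e, G.currentOut f e v := rfl

lemma sum_netFlow [Fintype V] (f : G.E → ℝ) : ∑ v, G.netFlow f v = 0 := by
  simp only [netFlow_eq_sum_currentOut, currentOut]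
  rw [sum_comm]
  exact sum_eq_zero fun e _ => by simp [sum_sub_distrib]

lemma IsUnitFlow.netFlow_sink [Fintype V] {p q : V} {f : G.E → ℝ} (hf : G.IsUnitFlow p q f)
    (hpq : p ≠ q) : G.netFlow f q = -1 := by
  have hsum := G.sum_netFlow f
  rw [← add_sum_erase _ _ (mem_univ p), ← add_sum_erase _ _ (mem_erase.2 ⟨hpq.symm, mem_univ q⟩),
    sum_eq_zero fun v hv => hf.2 v (mem_erase.1 (mem_erase.1 hv).2).1 (mem_erase.1 hv).1,
    hf.1] at hsum
  linarith

lemma effRes_le_energy {p q : V} {f : G.E → ℝ} (hf : G.IsUnitFlow p q f) :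
    G.effRes p q ≤ ENNReal.ofReal (G.energy f) := by
  unfold effRes
  split_ifs
  · exact zero_le
  · exact iInf_le_of_le ⟨f, hf⟩ le_rfl

lemma effRes_eq_iInf {p q : V} (h : p ≠ q) : G.effRes p q =
    ⨅ f : {f : G.E → ℝ // G.IsUnitFlow p q f}, ENNReal.ofReal (G.energy f) :=
  if_neg h

lemma Suppressible.netFlow_eq (h : G.Suppressible x u w e₁ e₂) (f : G.E → ℝ) :
    G.netFlow f x = G.currentOut f e₁ x + G.currentOut f e₂ x := by
  rw [netFlow_eq_sum_currentOut, ← sum_pair (f := fun e => G.currentOut f e x) h.edge_ne]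
  refine (sum_subset (subset_univ _) fun e _ he => ?_).symm
  simp only [mem_insert, mem_singleton, not_or] at he
  simp [currentOut, h.avoid e he.1 he.2]

/-- The current on `G⁺/x` that agrees with `f` on the kept edges and carries `c` along the new
edge `y₁ → y₂` and `d` along the leaf edge `x → ρ`. -/
noncomputable def contractFlow (G : Multigraph V) (x ρ : V) (e₁ e₂ : G.E) (y₁ y₂ : V)
    (f : G.E → ℝ) (c d : ℝ) : (contractPlus G x ρ e₁ e₂ y₁ y₂).E → ℝ :=
  Sum.elim (fun e => f e.1) ![c, d]

lemma sum_contractPlus_edges (h : e₁ ≠ e₂) (F : (contractPlus G x ρ e₁ e₂ u w).E → ℝ)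
    (F₀ : G.E → ℝ) (hF : ∀ e, F (Sum.inl e) = F₀ e.1) :
    ∑ e, F e = ∑ e, F₀ e - F₀ e₁ - F₀ e₂ + F (Sum.inr 0) + F (Sum.inr 1) := by
  have hsub : ∑ e : {e : G.E // e ≠ e₁ ∧ e ≠ e₂}, F₀ e.1 = ∑ e, F₀ e - F₀ e₁ - F₀ e₂ := by
    rw [← sum_subtype (univ \ {e₁, e₂}) (fun e => by simp [not_or]) F₀,
      sum_sdiff_eq_sub (subset_univ _), sum_pair h, sub_sub]
  rw [← hsub, add_assoc, ← Fin.sum_univ_two (fun i => F (Sum.inr i))]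
  simp only [← hF]
  exact Fintype.sum_sum_type F

lemma energy_contractFlow (h : e₁ ≠ e₂) (f : G.E → ℝ) (c d : ℝ) :
    (contractPlus G x ρ e₁ e₂ u w).energy (contractFlow G x ρ e₁ e₂ u w f c d) =
      G.energy f - f e₁ ^ 2 - f e₂ ^ 2 + c ^ 2 + d ^ 2 := by
  rw [energy, sum_contractPlus_edges h _ (fun e => f e ^ 2) fun _ => rfl]
  simp [contractFlow, energy]

lemma Suppressible.netFlow_contractFlow (h : G.Suppressible x u w e₁ e₂) (f : G.E → ℝ)
    (c d : ℝ) (v : V) :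
    (contractPlus G x ρ e₁ e₂ u w).netFlow (contractFlow G x ρ e₁ e₂ u w f c d) v =
      G.netFlow f v + (if v = x then d - G.netFlow f x else 0)
        + (if v = u then G.currentOut f e₁ x + c else 0)
        + (if v = w then G.currentOut f e₂ x - c else 0) - (if v = ρ then d else 0) := by
  rw [netFlow, sum_contractPlus_edges h.edge_ne _ (fun e => G.currentOut f e v) fun _ => rfl,
    ← netFlow_eq_sum_currentOut, h.ends_left.currentOut_eq, h.ends_right.currentOut_eq,
    h.netFlow_eq]
  simp only [contractFlow, contractPlus, Sum.elim_inr, Fin.isValue, ↓reduceIte, one_ne_zero,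
    Matrix.cons_val_zero, Matrix.cons_val_one, @eq_comm _ u v, @eq_comm _ w v, @eq_comm _ x v,
    @eq_comm _ ρ v]
  split_ifs <;> simp_all <;> ring

lemma IsUnitFlow.change_sink [Fintype V] {G' : Multigraph V} {f : G.E → ℝ} {g : G'.E → ℝ} {t : V}
    (hf : G.IsUnitFlow ρ x f) (hρx : ρ ≠ x) (hρt : ρ ≠ t)
    (hg : ∀ v, G'.netFlow g v =
      G.netFlow f v + (if v = x then 1 else 0) - (if v = t then 1 else 0)) :
    G'.IsUnitFlow ρ t g := by
  refine ⟨by simp [hg, hf.1, hρx, hρt], fun v hvρ hvt => ?_⟩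
  rw [hg]
  by_cases hvx : v = x
  · subst hvx
    simp [hf.netFlow_sink hρx, hvt]
  · simp [hf.2 v hvρ hvx, hvx, hvt]

lemma Suppressible.effRes_contractPlus_le (h : G.Suppressible x u w e₁ e₂) {t : V}
    {f : G.E → ℝ} (hf : G.IsUnitFlow ρ t f) (hρx : ρ ≠ x) (htx : t ≠ x) :
    (contractPlus G x ρ e₁ e₂ u w).effRes ρ t ≤
      ENNReal.ofReal (G.energy f - G.currentOut f e₁ x ^ 2) := by
  set g := contractFlow G x ρ e₁ e₂ u w f (G.currentOut f e₂ x) 0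
  have hx : G.netFlow f x = 0 := hf.2 x hρx.symm htx.symm
  have hsame : ∀ v, (contractPlus G x ρ e₁ e₂ u w).netFlow g v = G.netFlow f v := by
    intro v
    rw [h.netFlow_contractFlow, hx]
    rw [h.netFlow_eq] at hx
    simp [hx]
  have hg : (contractPlus G x ρ e₁ e₂ u w).IsUnitFlow ρ t g :=
    ⟨by rw [hsame, hf.1], fun v hvρ hvt => by rw [hsame, hf.2 v hvρ hvt]⟩
  refine (effRes_le_energy hg).trans_eq ?_
  rw [energy_contractFlow h.edge_ne, h.ends_left.sq_currentOut h.ne_left,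
    h.ends_right.sq_currentOut h.ne_right]
  ring_nf

lemma Suppressible.effRes_contractPlus_le_of_sink [Fintype V] (h : G.Suppressible x u w e₁ e₂)
    {f : G.E → ℝ} (hf : G.IsUnitFlow ρ x f) (hρx : ρ ≠ x) (hρu : ρ ≠ u) (hρw : ρ ≠ w) :
    (contractPlus G x ρ e₁ e₂ u w).effRes ρ u ≤
        ENNReal.ofReal (G.energy f - G.currentOut f e₁ x ^ 2) ∧
      (contractPlus G x ρ e₁ e₂ u w).effRes ρ w ≤
        ENNReal.ofReal (G.energy f - G.currentOut f e₂ x ^ 2) := by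
  have hx := hf.netFlow_sink hρx
  rw [h.netFlow_eq] at hx
  constructor
  · have hg := hf.change_sink (G' := contractPlus G x ρ e₁ e₂ u w)
      (g := contractFlow G x ρ e₁ e₂ u w f (G.currentOut f e₂ x) 0) hρx hρu fun v => by
        rw [h.netFlow_contractFlow, h.netFlow_eq, hx]
        split_ifs <;> ring
    refine (effRes_le_energy hg).trans_eq ?_
    rw [energy_contractFlow h.edge_ne, h.ends_left.sq_currentOut h.ne_left,
      h.ends_right.sq_currentOut h.ne_right]
    ring_nf
  · have hg := hf.change_sink (G' := contractPlus G x ρ e₁ e₂ u w)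
      (g := contractFlow G x ρ e₁ e₂ u w f (-G.currentOut f e₁ x) 0) hρx hρw fun v => by
        rw [h.netFlow_contractFlow, h.netFlow_eq, hx]
        simp only [show G.currentOut f e₂ x - -G.currentOut f e₁ x = -1 by linarith]
        split_ifs <;> ring
    refine (effRes_le_energy hg).trans_eq ?_
    rw [energy_contractFlow h.edge_ne, neg_sq, h.ends_left.sq_currentOut h.ne_left,
      h.ends_right.sq_currentOut h.ne_right]
    ring_nf

lemma Suppressible.effRes_contractPlus_leaf_le (h : G.Suppressible x u w e₁ e₂) (hρx : ρ ≠ x) :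
    (contractPlus G x ρ e₁ e₂ u w).effRes ρ x ≤ 1 := by
  have hg : (contractPlus G x ρ e₁ e₂ u w).IsUnitFlow ρ x
      (contractFlow G x ρ e₁ e₂ u w (fun _ => 0) 0 (-1)) := by
    have h0 : ∀ v, G.netFlow (fun _ => 0) v = 0 := fun v => by simp [netFlow]
    refine ⟨?_, fun v hvρ hvx => ?_⟩ <;> simp [h.netFlow_contractFlow, currentOut, *]
  refine (effRes_le_energy hg).trans_eq ?_
  rw [energy_contractFlow h.edge_ne]
  simp [energy]

lemma Suppressible.effRes_contractPlus_le_effRes (h : G.Suppressible x u w e₁ e₂) {t : V}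
    (hρx : ρ ≠ x) (htx : t ≠ x) :
    (contractPlus G x ρ e₁ e₂ u w).effRes ρ t ≤ G.effRes ρ t := by
  by_cases hρt : ρ = t
  · simp [effRes, hρt]
  rw [effRes_eq_iInf (G := G) hρt]
  exact le_iInf fun f => (h.effRes_contractPlus_le f.2 hρx htx).trans
    (ENNReal.ofReal_le_ofReal (by linarith [sq_nonneg (G.currentOut f.1 e₁ x)]))

lemma Suppressible.le_energy_of_isUnitFlow [Fintype V] (hx : G.Suppressible x u w e₁ e₂)
    (hu : G.Suppressible u x a e₁ e₃) (hw : G.Suppressible w x b e₂ e₄) (h34 : e₃ ≠ e₄)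
    (huw : u ≠ w) {f : G.E → ℝ} (hf : G.IsUnitFlow ρ u f) (hρx : ρ ≠ x) (hρu : ρ ≠ u)
    (hρw : ρ ≠ w) :
    3 * G.currentOut f e₁ x ^ 2 + (1 - G.currentOut f e₁ x) ^ 2 ≤ G.energy f := by
  have hx0 : G.netFlow f x = 0 := hf.2 x hρx.symm hx.ne_left
  have hu1 : G.netFlow f u = -1 := hf.netFlow_sink hρu
  have hw0 : G.netFlow f w = 0 := hf.2 w hρw.symm huw.symm
  rw [hx.netFlow_eq] at hx0
  rw [hu.netFlow_eq, hx.ends_left.currentOut_right hx.ne_left] at hu1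
  rw [hw.netFlow_eq, hx.ends_right.currentOut_right hx.ne_right] at hw0
  have h₂ : G.currentOut f e₂ x = -G.currentOut f e₁ x := by linarith
  have h₃ : G.currentOut f e₃ u = G.currentOut f e₁ x - 1 := by linarith
  have h₄ : G.currentOut f e₄ w = -G.currentOut f e₁ x := by linarith
  have h14 : e₁ ≠ e₄ := hx.ends_left.ne hw.ends_right hx.ne_right.symm huw.symm
  have h23 : e₂ ≠ e₃ := hx.ends_right.ne hu.ends_right hx.ne_left.symm huw
  have hsum := G.sum_sq_le_energy f {e₁, e₂, e₃, e₄}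
  rw [sum_insert (by simp [hx.edge_ne, hu.edge_ne, h14]), sum_insert (by simp [h23, hw.edge_ne]),
    sum_pair h34, ← hx.ends_left.sq_currentOut hx.ne_left,
    ← hx.ends_right.sq_currentOut hx.ne_right, ← hu.ends_right.sq_currentOut hu.ne_right,
    ← hw.ends_right.sq_currentOut hw.ne_right, h₂, h₃, h₄] at hsum
  linarith

lemma Suppressible.effRes_contractPlus_add_le_energy [Fintype V]
    (hx : G.Suppressible x u w e₁ e₂) (hu : G.Suppressible u x a e₁ e₃)
    (hw : G.Suppressible w x b e₂ e₄) (h34 : e₃ ≠ e₄) (huw : u ≠ w) (hρx : ρ ≠ x) (hρu : ρ ≠ u)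
    (hρw : ρ ≠ w) {fx fu fw : G.E → ℝ} (hfx : G.IsUnitFlow ρ x fx) (hfu : G.IsUnitFlow ρ u fu)
    (hfw : G.IsUnitFlow ρ w fw) :
    (contractPlus G x ρ e₁ e₂ u w).effRes ρ x + (contractPlus G x ρ e₁ e₂ u w).effRes ρ u
      + (contractPlus G x ρ e₁ e₂ u w).effRes ρ w + ENNReal.ofReal (1 / 100)
      ≤ ENNReal.ofReal (G.energy fx) + ENNReal.ofReal (G.energy fu)
        + ENNReal.ofReal (G.energy fw) := by
  obtain ⟨hRu, hRw⟩ := hx.effRes_contractPlus_le_of_sink hfx hρx hρu hρw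
  have hRu' := hx.effRes_contractPlus_le hfu hρx hx.ne_left.symm
  have hRw' := hx.effRes_contractPlus_le hfw hρx hx.ne_right.symm
  have hU := hx.le_energy_of_isUnitFlow hu hw h34 huw hfu hρx hρu hρw
  have hW := hx.symm.le_energy_of_isUnitFlow hw hu h34.symm huw.symm hfw hρx hρw hρu
  have hp : G.currentOut fx e₁ x + G.currentOut fx e₂ x = -1 := by
    rw [← hx.netFlow_eq]; exact hfx.netFlow_sink hρx
  have hr : G.currentOut fw e₁ x = -G.currentOut fw e₂ x := by
    have := hfw.2 x hρx.symm hx.ne_right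
    rw [hx.netFlow_eq] at this
    linarith
  rw [hr, neg_sq] at hRw'
  set A := G.energy fx
  set U := G.energy fu
  set W := G.energy fw
  set p₁ := G.currentOut fx e₁ x
  set p₂ := G.currentOut fx e₂ x
  set q := G.currentOut fu e₁ x
  set r := G.currentOut fw e₂ x
  have hp₁ : p₁ ^ 2 ≤ A := (hx.ends_left.sq_currentOut hx.ne_left fx).trans_le (sq_le_energy _ _)
  have hp₂ : p₂ ^ 2 ≤ A := (hx.ends_right.sq_currentOut hx.ne_right fx).trans_le (sq_le_energy _ _)
  have hm₁ : 0 ≤ min (U - q ^ 2) (A - p₁ ^ 2) :=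
    le_min (by nlinarith [sq_nonneg (1 - q)]) (by linarith)
  have hm₂ : 0 ≤ min (W - r ^ 2) (A - p₂ ^ 2) :=
    le_min (by nlinarith [sq_nonneg (1 - r)]) (by linarith)
  calc _ ≤ ENNReal.ofReal 1 + ENNReal.ofReal (min (U - q ^ 2) (A - p₁ ^ 2))
          + ENNReal.ofReal (min (W - r ^ 2) (A - p₂ ^ 2)) + ENNReal.ofReal (1 / 100) := by
        rw [ENNReal.ofReal_one, ENNReal.ofReal_min, ENNReal.ofReal_min]
        gcongr
        · exact hx.effRes_contractPlus_leaf_le hρx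
        · exact le_min hRu' hRu
        · exact le_min hRw' hRw
    _ = ENNReal.ofReal (1 + min (U - q ^ 2) (A - p₁ ^ 2) + min (W - r ^ 2) (A - p₂ ^ 2)
          + 1 / 100) := by
        rw [ENNReal.ofReal_add, ENNReal.ofReal_add, ENNReal.ofReal_add] <;> positivity
    _ ≤ ENNReal.ofReal (A + U + W) := ENNReal.ofReal_le_ofReal (one_add_min_add_min_le hp hU hW)
    _ ≤ _ := ENNReal.ofReal_add_le.trans (add_le_add_left ENNReal.ofReal_add_le _)

theorem Suppressible.effRes_contractPlus_add_le [Fintype V] (hx : G.Suppressible x u w e₁ e₂)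
    (hu : G.Suppressible u x a e₁ e₃) (hw : G.Suppressible w x b e₂ e₄) (h34 : e₃ ≠ e₄)
    (huw : u ≠ w) (hρx : ρ ≠ x) (hρu : ρ ≠ u) (hρw : ρ ≠ w) :
    (contractPlus G x ρ e₁ e₂ u w).effRes ρ x + (contractPlus G x ρ e₁ e₂ u w).effRes ρ u
      + (contractPlus G x ρ e₁ e₂ u w).effRes ρ w + ENNReal.ofReal (1 / 100)
      ≤ G.effRes ρ x + G.effRes ρ u + G.effRes ρ w := by
  rw [effRes_eq_iInf (G := G) hρx, effRes_eq_iInf (G := G) hρu, effRes_eq_iInf (G := G) hρw]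
  simp only [ENNReal.iInf_add, ENNReal.add_iInf]
  exact le_iInf fun fw => le_iInf fun fu => le_iInf fun fx =>
    hx.effRes_contractPlus_add_le_energy hu hw h34 huw hρx hρu hρw fx.2 fu.2 fw.2

lemma degree_eq_sum (v : V) :
    G.degree v = ∑ e, ((if G.fst e = v then 1 else 0) + (if G.snd e = v then 1 else 0)) := by
  simp only [degree, sum_add_distrib, card_filter]

lemma sum_degree [Fintype V] : ∑ v, G.degree v = 2 * G.edgeCount := by
  simp_rw [degree_eq_sum]
  rw [sum_comm]
  simp [sum_add_distrib, edgeCount, mul_comm]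

lemma card_filter_le_sum_degree [Fintype V] (T : Finset V) :
    #{e | G.fst e ∈ T ∨ G.snd e ∈ T} ≤ ∑ v ∈ T, G.degree v := by
  calc #{e | G.fst e ∈ T ∨ G.snd e ∈ T} ≤ #{e | G.fst e ∈ T} + #{e | G.snd e ∈ T} := by
        rw [filter_or]; exact card_union_le _ _
    _ = ∑ v ∈ T, G.degree v := by
        simp only [degree, sum_add_distrib, sum_card_fiberwise_eq_card_filter]

lemma Ends.one_le_degree {e : G.E} {p q : V} (h : G.Ends e p q) : 1 ≤ G.degree p := by
  rcases h with ⟨h1, -⟩ | ⟨-, h2⟩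
  · exact le_add_right (card_pos.2 ⟨e, by simp [h1]⟩)
  · exact le_add_left (card_pos.2 ⟨e, by simp [h2]⟩)

lemma Connected.two_le_degree [Fintype V] (hconn : G.Connected) (hleaf : ∀ v, G.degree v ≠ 1)
    (hV : 1 < Fintype.card V) (v : V) : 2 ≤ G.degree v := by
  by_contra! hv
  have hS : ∀ e y z, G.Ends e y z → y ∈ ({v} : Set V) → z ∈ ({v} : Set V) := by
    rintro e y z he rfl
    have := he.one_le_degree
    have := hleaf y
    omega
  obtain ⟨z, hz⟩ := Fintype.exists_ne_of_one_lt_card hV v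
  exact hz (hconn.mem_of_closed hS (q := z) rfl)

lemma exists_degree_eq_two_of_edgeCount_lt [Fintype V] (ρ : V) (hdeg : ∀ v, 2 ≤ G.degree v)
    (hm : 8 * G.edgeCount < 9 * (Fintype.card V - 1)) :
    ∃ x, x ≠ ρ ∧ G.degree x = 2 ∧ ∀ e y, G.Ends e x y → y ≠ ρ ∧ G.degree y = 2 := by
  by_contra! h
  set P : V → Prop := fun v => v ≠ ρ ∧ G.degree v = 2
  set D := univ.filter P
  set T := univ.filter fun v => ¬ P v
  have hD : #D ≤ ∑ v ∈ T, G.degree v := by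
    refine (card_le_card_of_forall_subsingleton (fun x e => ∃ y, G.Ends e x y ∧ ¬ P y)
      (t := univ.filter fun e => G.fst e ∈ T ∨ G.snd e ∈ T) ?_ ?_).trans
      (card_filter_le_sum_degree T)
    · intro x hx
      obtain ⟨e, y, he, hy⟩ := h x (mem_filter.1 hx).2.1 (mem_filter.1 hx).2.2
      refine ⟨e, ?_, y, he, fun hP => hy hP.1 hP.2⟩
      rcases he with ⟨-, h2⟩ | ⟨h1, -⟩ <;> simp [T, *] <;> tauto
    · intro e _ x hx x' hx'
      simp only [Set.mem_ofPred_eq] at hx hx'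
      obtain ⟨hxD, y, hy, -⟩ := hx
      obtain ⟨-, y', hy', hPy'⟩ := hx'
      by_contra hne
      exact hPy' ((hy.eq_of_ends hy' hne).1 ▸ (mem_filter.1 hxD).2)
  have hsplit : ∑ v ∈ D, G.degree v + ∑ v ∈ T, G.degree v = 2 * G.edgeCount := by
    rw [sum_filter_add_sum_filter_not, sum_degree]
  have hDdeg : ∑ v ∈ D, G.degree v = 2 * #D := by
    rw [sum_const_nat fun v hv => (mem_filter.1 hv).2.2, mul_comm]
  have hT : 3 * #T ≤ ∑ v ∈ T, G.degree v + 1 := by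
    have hρT : ρ ∈ T := by simp [T, P]
    calc 3 * #T = ∑ v ∈ T, 3 := by simp [mul_comm]
      _ ≤ ∑ v ∈ T, (G.degree v + if v = ρ then 1 else 0) := sum_le_sum fun v hv => by
          have := hdeg v
          by_cases hvρ : v = ρ
          · simp [hvρ] at this ⊢; omega
          · have : G.degree v ≠ 2 := fun h2 => (mem_filter.1 hv).2 ⟨hvρ, h2⟩
            simp [hvρ]; omega
      _ = ∑ v ∈ T, G.degree v + 1 := by rw [sum_add_distrib, sum_ite_eq' T ρ, if_pos hρT]
  have hcard : #D + #T = Fintype.card V := card_filter_add_card_filter_not _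
  omega

lemma Ends.exists_suppressible {v u : V} {e₁ : G.E} (h₁ : G.Ends e₁ v u) (hvu : v ≠ u)
    (hdeg : G.degree v = 2) : ∃ w e₂, G.Suppressible v u w e₁ e₂ := by
  set n : G.E → ℕ := fun e => (if G.fst e = v then 1 else 0) + (if G.snd e = v then 1 else 0)
  have hn₁ : n e₁ = 1 := by
    rcases h₁ with ⟨h, h'⟩ | ⟨h, h'⟩ <;> simp [n, h, h', hvu.symm]
  have hrest : ∑ e ∈ univ.erase e₁, n e = 1 := by
    have := add_sum_erase univ n (mem_univ e₁)
    rw [← degree_eq_sum] at this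
    omega
  obtain ⟨e₂, he₂, hne⟩ := exists_ne_zero_of_sum_ne_zero (by omega : ∑ e ∈ univ.erase e₁, n e ≠ 0)
  have hsplit := add_sum_erase _ n he₂
  have hzero : ∀ e ∈ (univ.erase e₁).erase e₂, n e = 0 := sum_eq_zero_iff.1 (by omega)
  have hn₂ : n e₂ = 1 := by omega
  obtain ⟨w, hw, hvw⟩ : ∃ w, G.Ends e₂ v w ∧ v ≠ w := by
    by_cases h1 : G.fst e₂ = v <;> by_cases h2 : G.snd e₂ = v
    · simp [n, h1, h2] at hn₂
    · exact ⟨_, Or.inl ⟨h1, rfl⟩, fun h => h2 h.symm⟩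
    · exact ⟨_, Or.inr ⟨rfl, h2⟩, fun h => h1 h.symm⟩
    · simp [n, h1, h2] at hn₂
  refine ⟨w, e₂, h₁, hw, hvu, hvw, (mem_erase.1 he₂).1.symm, fun e he1 he2 => ?_⟩
  simpa [n] using hzero e (by simp [he1, he2])

lemma exists_suppressible_path [Fintype V] (ρ : V) (hconn : G.Connected)
    (hdeg : ∀ v, 2 ≤ G.degree v) (hm : 8 * G.edgeCount < 9 * (Fintype.card V - 1)) :
    ∃ (x u w a b : V) (e₁ e₂ e₃ e₄ : G.E), G.degree x = 2 ∧ G.Suppressible x u w e₁ e₂ ∧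
      G.Suppressible u x a e₁ e₃ ∧ G.Suppressible w x b e₂ e₄ ∧ e₃ ≠ e₄ ∧ u ≠ w ∧
      ρ ≠ x ∧ ρ ≠ u ∧ ρ ≠ w := by
  obtain ⟨x, hxρ, hx2, hnbr⟩ := exists_degree_eq_two_of_edgeCount_lt ρ hdeg hm
  obtain ⟨e₁, u, h₁, hu⟩ : ∃ e z, G.Ends e x z ∧ z ≠ x := by
    by_contra! h
    exact hxρ (hconn.mem_of_closed (S := {x}) (by rintro e y z he rfl; exact h e z he) rfl).symm
  obtain ⟨w, e₂, hx⟩ := h₁.exists_suppressible hu.symm hx2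
  obtain ⟨huρ, hu2⟩ := hnbr e₁ u hx.ends_left
  obtain ⟨hwρ, hw2⟩ := hnbr e₂ w hx.ends_right
  obtain ⟨a, e₃, hu⟩ := hx.ends_left.symm.exists_suppressible hx.ne_left.symm hu2
  obtain ⟨b, e₄, hw⟩ := hx.ends_right.symm.exists_suppressible hx.ne_right.symm hw2
  have huw : u ≠ w := by
    rintro rfl
    have hax : a = x := by
      rcases hu.eq_of_ends hx.ends_right.symm with ⟨h, -⟩ | ⟨-, h⟩
      · exact absurd h hx.edge_ne.symm
      · exact h.symm
    have hρ : ρ ∈ ({x, u} : Set V) := hconn.mem_of_closed (p := x) (by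
      rintro e y z he (rfl | rfl)
      · rcases hx.eq_of_ends he with ⟨-, rfl⟩ | ⟨-, rfl⟩ <;> simp
      · rcases hu.eq_of_ends he with ⟨-, rfl⟩ | ⟨-, rfl⟩ <;> simp [hax]) (by simp)
    rcases hρ with rfl | rfl <;> simp_all
  have h34 : e₃ ≠ e₄ := by
    rintro rfl
    obtain ⟨rfl, rfl⟩ := hu.ends_right.eq_of_ends hw.ends_right huw
    have hρ : ρ ∈ ({x, u, a} : Set V) := hconn.mem_of_closed (p := x) (by
      rintro e y z he (rfl | rfl | rfl)
      · rcases hx.eq_of_ends he with ⟨-, rfl⟩ | ⟨-, rfl⟩ <;> simp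
      · rcases hu.eq_of_ends he with ⟨-, rfl⟩ | ⟨-, rfl⟩ <;> simp
      · rcases hw.eq_of_ends he with ⟨-, rfl⟩ | ⟨-, rfl⟩ <;> simp) (by simp)
    rcases hρ with rfl | rfl | rfl <;> simp_all
  exact ⟨x, u, w, a, b, e₁, e₂, e₃, e₄, hx2, hx, hu, hw, h34, huw, hxρ.symm, huρ.symm, hwρ.symm⟩

end Multigraph

/-- **Lemma (a good contraction exists).** Let `G` be a connected rooted graph with `n`
non-root vertices, no leaves, and fewer than `9n/8` edges.  Then there is a vertex `x`
of degree 2, with incident edges `e₁, e₂` and neighbours `y₁, y₂`, such that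
`Rtot(G) - Rtot(G⁺/x) ≥ 1/100`, where `G⁺/x` is obtained from `G` by deleting `x`'s two
edges, adding the edge `y₁y₂` (contracting `y₁x`) and attaching a new leaf to the root. -/
theorem stmt15 (n : ℕ) (G : Multigraph (Fin (n + 1))) (ρ : Fin (n + 1))
    (hconn : G.Connected) (hnoleaf : ∀ v : Fin (n + 1), G.degree v ≠ 1)
    (hm : 8 * G.edgeCount < 9 * n) :
    ∃ (x y₁ y₂ : Fin (n + 1)) (e₁ e₂ : G.E), e₁ ≠ e₂ ∧ G.degree x = 2 ∧
      ((G.fst e₁ = x ∧ G.snd e₁ = y₁) ∨ (G.fst e₁ = y₁ ∧ G.snd e₁ = x)) ∧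
      ((G.fst e₂ = x ∧ G.snd e₂ = y₂) ∨ (G.fst e₂ = y₂ ∧ G.snd e₂ = x)) ∧
      Rtot (contractPlus G x ρ e₁ e₂ y₁ y₂) ρ + ENNReal.ofReal (1 / 100) ≤ Rtot G ρ := by
  have hV : 1 < Fintype.card (Fin (n + 1)) := by simp; omega
  obtain ⟨x, u, w, a, b, e₁, e₂, e₃, e₄, hx2, hx, hu, hw, h34, huw, hρx, hρu, hρw⟩ :=
    exists_suppressible_path ρ hconn (hconn.two_le_degree hnoleaf hV) (by simpa using hm)
  refine ⟨x, u, w, e₁, e₂, hx.edge_ne, hx2, hx.ends_left, hx.ends_right, ?_⟩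
  exact sum_add_le_sum_of_le_off_triple hx.ne_left hx.ne_right huw
    (hx.effRes_contractPlus_add_le hu hw h34 huw hρx hρu hρw)
    fun z hzx _ _ => hx.effRes_contractPlus_le_effRes hρx hzx
end
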